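/- Let u be a concave, law-determined monetary utility function on L^∞ of an atomless probability space, with the Fatou property and the CxLS property, and assume u is not the essential infimum (there exists ξ ∈ L^∞ with u(ξ) ≠ ess inf ξ). Then there exists k_0 < 0 such that for every a > 0 there exists α ∈ (0,1) with u(α δ_{k_0} + (1−α) δ_a) ≥ 0. -/

import Mathlib

open MeasureTheory Filter Set

/-- A (representative of an) element of `L^∞`: a measurable, essentially bounded function. -/
def BddMeas {Ω : Type} [MeasurableSpace Ω] (P : Measure Ω) (ξ : Ω → ℝ) : Prop :=
  Measurable ξ ∧ ∃ C : ℝ, ∀ᵐ ω ∂P, |ξ ω| ≤ C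

/-- `ξ` has the two-point law `l·δ_x + (1-l)·δ_y`. -/
def HasDyadicLaw {Ω : Type} [MeasurableSpace Ω] (P : Measure Ω) (ξ : Ω → ℝ)
    (x y l : ℝ) : Prop :=
  P.map ξ = ENNReal.ofReal l • Measure.dirac x + ENNReal.ofReal (1 - l) • Measure.dirac y

/-- Convex level sets at the level of distributions: if `u ξ = u η`, `l ∈ (0,1)` and `ζ` has
law `l·Law(ξ) + (1-l)·Law(η)`, then `u ζ = u ξ`. -/
def CxLS {Ω : Type} [MeasurableSpace Ω] (P : Measure Ω) (u : (Ω → ℝ) → ℝ) : Prop :=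
  ∀ ξ η ζ : Ω → ℝ, BddMeas P ξ → BddMeas P η → BddMeas P ζ → u ξ = u η →
    ∀ l : ℝ, 0 < l → l < 1 →
      P.map ζ = ENNReal.ofReal l • P.map ξ + ENNReal.ofReal (1 - l) • P.map η →
      u ζ = u ξ

/-- The essential infimum of `ξ` with respect to `P`. -/
noncomputable def essInfR {Ω : Type} [MeasurableSpace Ω] (P : Measure Ω) (ξ : Ω → ℝ) : ℝ :=
  sSup {c : ℝ | ∀ᵐ ω ∂P, c ≤ ξ ω}

open scoped ENNReal

/-!
Since `u ≠ ess inf`, some two-point position `ζ`, equal to `k₀ < 0` on a set of probability `p`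
and to `b` elsewhere, has `u ζ = 0`: take `c` strictly between `ess inf ξ` and `u ξ`, dominate `ξ`
by `c` on `{ξ ≤ c}` and by its sup-bound elsewhere, and translate.
By CxLS, mixing the law of `ζ` with `δ₀` in proportion `t : 1 - t` keeps the utility `0`; on an
atomless space this mixture is realised by `k₀` on a set `A` of mass `t p`, `b` on any set `F ⊆ Aᶜ`
of mass `t (1 - p)`, and `0` elsewhere. For `t` with `t p + n t (1 - p) = 1`, the set `Aᶜ` splits
into `n` such sets `F`, and averaging the `n` positions gives `k₀` on `A` and `b / n` on `Aᶜ`, of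
utility `≥ 0` by concavity. For `n ≥ b / a`, monotonicity finishes the proof.
-/

/-- Not Mathlib's `NoAtoms`, which only asks singletons to be null. -/
def IsAtomless {Ω : Type*} [MeasurableSpace Ω] (P : Measure Ω) : Prop :=
  ∀ A : Set Ω, MeasurableSet A → 0 < P A →
    ∃ B : Set Ω, B ⊆ A ∧ MeasurableSet B ∧ 0 < P B ∧ P B < P A

theorem ENNReal.exists_mem_forall_le_two_mul {α : Type*} {s : Set α} (hs : s.Nonempty)
    (f : α → ℝ≥0∞) (hf : ⨆ x ∈ s, f x ≠ ∞) : ∃ x ∈ s, ∀ y ∈ s, f y ≤ 2 * f x := by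
  set M := ⨆ x ∈ s, f x
  by_cases hM : M = 0
  · obtain ⟨x, hx⟩ := hs
    exact ⟨x, hx, fun y hy => (le_biSup f hy).trans (by simp [M, hM])⟩
  · obtain ⟨x, hx, hlt⟩ := lt_biSup_iff.mp (ENNReal.half_lt_self hM hf)
    refine ⟨x, hx, fun y hy => ?_⟩
    calc f y ≤ M := le_biSup f hy
      _ = 2 * (M / 2) := (ENNReal.mul_div_cancel' (by simp) (by simp)).symm
      _ ≤ 2 * f x := by gcongr

namespace IsAtomless

variable {Ω : Type*} [MeasurableSpace Ω] {P : Measure Ω}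

lemma exists_subset_two_mul_le (hP : IsAtomless P) {A : Set Ω} (hA : MeasurableSet A)
    (h0 : 0 < P A) : ∃ B ⊆ A, MeasurableSet B ∧ 0 < P B ∧ 2 * P B ≤ P A := by
  obtain ⟨B, hBA, hB, hB0, hBlt⟩ := hP A hA h0
  have hsum : P B + P (A \ B) = P A := by
    rw [measure_add_sdiff hB.nullMeasurableSet, union_eq_right.mpr hBA]
  rcases le_total (P B) (P (A \ B)) with hle | hle
  · exact ⟨B, hBA, hB, hB0, by rw [two_mul, ← hsum]; gcongr⟩
  · refine ⟨A \ B, sdiff_subset, hA.diff hB, pos_iff_ne_zero.mpr fun h => ?_, ?_⟩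
    · rw [h, add_zero] at hsum
      exact hBlt.ne hsum
    · rw [two_mul, ← hsum]; gcongr

lemma exists_subset_pos_le (hP : IsAtomless P) [IsFiniteMeasure P] {A : Set Ω}
    (hA : MeasurableSet A) (h0 : 0 < P A) {ε : ℝ≥0∞} (hε : ε ≠ 0) :
    ∃ B ⊆ A, MeasurableSet B ∧ 0 < P B ∧ P B ≤ ε := by
  have halving : ∀ k : ℕ, ∃ B ⊆ A, MeasurableSet B ∧ 0 < P B ∧ 2 ^ k * P B ≤ P A := by
    intro k
    induction k with
    | zero => exact ⟨A, subset_rfl, hA, h0, by simp⟩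
    | succ k ih =>
      obtain ⟨B, hBA, hB, hB0, hBk⟩ := ih
      obtain ⟨B', hB'B, hB', hB'0, hB'2⟩ := hP.exists_subset_two_mul_le hB hB0
      refine ⟨B', hB'B.trans hBA, hB', hB'0, ?_⟩
      calc 2 ^ (k + 1) * P B' = 2 ^ k * (2 * P B') := by ring
        _ ≤ 2 ^ k * P B := by gcongr
        _ ≤ P A := hBk
  obtain ⟨k, hk⟩ := ENNReal.exists_nat_mul_gt hε (measure_ne_top P A)
  obtain ⟨B, hBA, hB, hB0, hBk⟩ := halving k
  refine ⟨B, hBA, hB, hB0, le_of_lt ?_⟩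
  refine lt_of_mul_lt_mul_left (a := 2 ^ k) ?_ zero_le
  calc 2 ^ k * P B ≤ P A := hBk
    _ < k * ε := hk
    _ ≤ 2 ^ k * ε := by gcongr; exact_mod_cast Nat.lt_two_pow_self.le

end IsAtomless

section Sierpinski

variable {Ω : Type*} [MeasurableSpace Ω] {P : Measure Ω}

lemma exists_extension_forall_le_two_mul {S B : Set Ω} {r : ℝ≥0∞} (hr : r ≠ ∞)
    (hB : P B ≤ r) : ∃ C, MeasurableSet C ∧ C ⊆ S \ B ∧ P (B ∪ C) ≤ r ∧
      ∀ D, MeasurableSet D → D ⊆ S \ B → P (B ∪ D) ≤ r → P D ≤ 2 * P C := by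
  set adm := {C | MeasurableSet C ∧ C ⊆ S \ B ∧ P (B ∪ C) ≤ r}
  have hbdd : ⨆ C ∈ adm, P C ≠ ∞ :=
    ne_top_of_le_ne_top hr (iSup₂_le fun C hC => (measure_mono subset_union_right).trans hC.2.2)
  obtain ⟨C, ⟨hC, hCS, hCr⟩, hmax⟩ := ENNReal.exists_mem_forall_le_two_mul (s := adm)
    ⟨∅, MeasurableSet.empty, empty_subset _, by simpa using hB⟩ P hbdd
  exact ⟨C, hC, hCS, hCr, fun D hD hDS hDr => hmax D ⟨hD, hDS, hDr⟩⟩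

theorem IsAtomless.exists_subset_measure_eq (hP : IsAtomless P) [IsFiniteMeasure P] {S : Set Ω}
    (hS : MeasurableSet S) {r : ℝ≥0∞} (hr : r ≤ P S) : ∃ B ⊆ S, MeasurableSet B ∧ P B = r := by
  have hr_top : r ≠ ∞ := ne_top_of_le_ne_top (measure_ne_top P S) hr
  have hstep : ∀ B, ∃ C, P B ≤ r → MeasurableSet C ∧ C ⊆ S \ B ∧ P (B ∪ C) ≤ r ∧
      ∀ D, MeasurableSet D → D ⊆ S \ B → P (B ∪ D) ≤ r → P D ≤ 2 * P C := fun B => by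
    by_cases hB : P B ≤ r
    · obtain ⟨C, hC⟩ := exists_extension_forall_le_two_mul (S := S) hr_top hB
      exact ⟨C, fun _ => hC⟩
    · exact ⟨∅, fun h => absurd h hB⟩
  choose C hC using hstep
  set B : ℕ → Set Ω := fun n => (fun B => B ∪ C B)^[n] ∅
  have hB_succ (n : ℕ) : B (n + 1) = B n ∪ C (B n) := Function.iterate_succ_apply' _ n ∅
  have hB (n : ℕ) : MeasurableSet (B n) ∧ B n ⊆ S ∧ P (B n) ≤ r := by
    induction n with
    | zero => simp [B]
    | succ n ih =>
      obtain ⟨hCm, hCS, hCr, -⟩ := hC (B n) ih.2.2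
      rw [hB_succ]
      exact ⟨ih.1.union hCm, union_subset ih.2.1 (hCS.trans sdiff_subset), hCr⟩
  have hmono : Monotone B :=
    monotone_nat_of_le_succ fun n => by rw [hB_succ]; exact subset_union_left
  set W := ⋃ n, B n
  have hW : MeasurableSet W := .iUnion fun n => (hB n).1
  have hWS : W ⊆ S := iUnion_subset fun n => (hB n).2.1
  have hWr : P W ≤ r := by
    rw [hmono.measure_iUnion]; exact iSup_le fun n => (hB n).2.2
  refine ⟨W, hWS, hW, le_antisymm hWr (not_lt.mp fun hlt => ?_)⟩
  have hSW : 0 < P (S \ W) := by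
    rw [measure_sdiff hWS hW.nullMeasurableSet (measure_ne_top P W)]
    exact tsub_pos_of_lt (hlt.trans_le hr)
  -- a fixed positive piece of `S \ W` fits beside every `B n`, so each step gains half of it
  obtain ⟨D, hDS, hD, hD0, hDr⟩ :=
    hP.exists_subset_pos_le (hS.diff hW) hSW (tsub_pos_of_lt hlt).ne'
  have hD_fits (n : ℕ) : P D ≤ 2 * P (C (B n)) := by
    refine (hC (B n) (hB n).2.2).2.2.2 D hD
      (fun x hx => ⟨(hDS hx).1, fun h => (hDS hx).2 (mem_iUnion_of_mem n h)⟩) ?_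
    calc P (B n ∪ D) ≤ P W + (r - P W) :=
          (measure_union_le _ _).trans (add_le_add (measure_mono (subset_iUnion B n)) hDr)
      _ = r := add_tsub_cancel_of_le hWr
  have hgrow (n : ℕ) : n * P D ≤ 2 * P (B n) := by
    induction n with
    | zero => simp
    | succ n ih =>
      obtain ⟨hCm, hCS, -, -⟩ := hC (B n) (hB n).2.2
      rw [hB_succ, measure_union (disjoint_of_subset_right hCS disjoint_sdiff_right) hCm]
      push_cast
      calc ((n : ℝ≥0∞) + 1) * P D = n * P D + P D := by ring
        _ ≤ 2 * P (B n) + 2 * P (C (B n)) := add_le_add ih (hD_fits n)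
        _ = 2 * (P (B n) + P (C (B n))) := by ring
  obtain ⟨n, hn⟩ := ENNReal.exists_nat_mul_gt (b := 2 * r) hD0.ne' (by finiteness)
  exact (hn.trans_le ((hgrow n).trans (by gcongr; exact (hB n).2.2))).false

end Sierpinski

open scoped Classical in
noncomputable def stepFn {Ω : Type*} (A U : Set Ω) (x y : ℝ) : Ω → ℝ :=
  fun ω => if ω ∈ A then x else if ω ∈ U then y else 0

section StepFn

variable {Ω : Type} [MeasurableSpace Ω] {P : Measure Ω} {A U : Set Ω}

lemma measurable_stepFn (hA : MeasurableSet A) (hU : MeasurableSet U) (x y : ℝ) :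
    Measurable (stepFn A U x y) :=
  Measurable.ite hA measurable_const (Measurable.ite hU measurable_const measurable_const)

lemma bddMeas_stepFn (hA : MeasurableSet A) (hU : MeasurableSet U) (x y : ℝ) :
    BddMeas P (stepFn A U x y) := by
  refine ⟨measurable_stepFn hA hU x y, |x| + |y|, Eventually.of_forall fun ω => ?_⟩
  unfold stepFn
  split_ifs <;> simp [abs_nonneg, add_nonneg]

lemma bddMeas_const (c : ℝ) : BddMeas P (fun _ => c) :=
  ⟨measurable_const, |c|, Eventually.of_forall fun _ => le_rfl⟩

lemma map_restrict_eq_smul_dirac {β : Type*} [MeasurableSpace β] {f : Ω → β} {x : β}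
    (hA : MeasurableSet A) (hf : ∀ ω ∈ A, f ω = x) : (P.restrict A).map f = P A • Measure.dirac x := by
  rw [Measure.map_congr (g := fun _ => x) (ae_restrict_of_forall_mem hA hf), Measure.map_const,
    Measure.restrict_apply_univ]

lemma map_stepFn (hA : MeasurableSet A) (hU : MeasurableSet U) (hAU : Disjoint A U) (x y : ℝ) :
    P.map (stepFn A U x y) =
      P A • Measure.dirac x + P U • Measure.dirac y + P (A ∪ U)ᶜ • Measure.dirac 0 := by
  have hf := measurable_stepFn hA hU x y
  conv_lhs => rw [← Measure.restrict_add_restrict_compl (μ := P) (hA.union hU),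
    Measure.restrict_union hAU hU]
  rw [Measure.map_add _ _ hf, Measure.map_add _ _ hf,
    map_restrict_eq_smul_dirac (x := x) hA fun ω hω => by simp [stepFn, hω],
    map_restrict_eq_smul_dirac (x := y) hU fun ω hω => by
      simp [stepFn, hω, hAU.notMem_of_mem_right hω],
    map_restrict_eq_smul_dirac (x := 0) (hA.union hU).compl fun ω hω => by
      simp_all [stepFn]]

lemma measure_compl_eq_ofReal [IsProbabilityMeasure P] {p : ℝ} (hA : MeasurableSet A)
    (hp : 0 ≤ p) (hPA : P A = ENNReal.ofReal p) : P Aᶜ = ENNReal.ofReal (1 - p) := by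
  rw [prob_compl_eq_one_sub hA, hPA, ENNReal.ofReal_sub 1 hp, ENNReal.ofReal_one]

lemma hasDyadicLaw_stepFn_compl [IsProbabilityMeasure P] {p : ℝ} (hA : MeasurableSet A)
    (hp : 0 ≤ p) (hPA : P A = ENNReal.ofReal p) (x y : ℝ) :
    HasDyadicLaw P (stepFn A Aᶜ x y) x y p := by
  rw [HasDyadicLaw, map_stepFn hA hA.compl disjoint_compl_right, union_compl_self, compl_univ,
    measure_empty, zero_smul, add_zero, hPA, measure_compl_eq_ofReal hA hp hPA]

end StepFn

section Utility

variable {Ω : Type} [MeasurableSpace Ω] {P : Measure Ω} {u : (Ω → ℝ) → ℝ}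

lemma utility_const
    (hTI : ∀ ξ : Ω → ℝ, BddMeas P ξ → ∀ h : ℝ, u (fun ω => ξ ω + h) = u ξ + h)
    (hNorm : u (fun _ => 0) = 0) (c : ℝ) : u (fun _ => c) = c := by
  simpa [hNorm] using hTI _ (bddMeas_const 0) c

lemma le_essInfR_of_ae_le [NeZero P] {ξ : Ω → ℝ} (hξ : BddMeas P ξ) {c : ℝ}
    (hc : ∀ᵐ ω ∂P, c ≤ ξ ω) : c ≤ essInfR P ξ := by
  obtain ⟨-, C, hC⟩ := hξ
  refine le_csSup ⟨C, fun c' (hc' : ∀ᵐ ω ∂P, c' ≤ ξ ω) => ?_⟩ hc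
  obtain ⟨ω, hω, hωC⟩ := (hc'.and hC).exists
  exact hω.trans ((le_abs_self _).trans hωC)

lemma essInfR_le_utility
    (hTI : ∀ ξ : Ω → ℝ, BddMeas P ξ → ∀ h : ℝ, u (fun ω => ξ ω + h) = u ξ + h)
    (hMono : ∀ ξ η : Ω → ℝ, BddMeas P ξ → BddMeas P η → (∀ᵐ ω ∂P, ξ ω ≤ η ω) → u ξ ≤ u η)
    (hNorm : u (fun _ => 0) = 0) {ξ : Ω → ℝ} (hξ : BddMeas P ξ) : essInfR P ξ ≤ u ξ := by
  obtain ⟨C, hC⟩ := hξ.2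
  refine csSup_le ⟨-C, hC.mono fun ω hω => neg_le_of_abs_le hω⟩ fun c hc => ?_
  rw [← utility_const hTI hNorm c]
  exact hMono _ _ (bddMeas_const c) hξ hc

lemma measure_le_pos_of_essInfR_lt [NeZero P] {ξ : Ω → ℝ} (hξ : BddMeas P ξ)
    {c : ℝ} (hc : essInfR P ξ < c) : 0 < P {ω | ξ ω ≤ c} := by
  refine pos_iff_ne_zero.mpr fun h0 => hc.not_ge (le_essInfR_of_ae_le hξ ?_)
  filter_upwards [measure_eq_zero_iff_ae_notMem.mp h0] with ω hω
  exact (not_le.mp hω).le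

lemma measure_le_lt_one_of_lt_utility [IsProbabilityMeasure P]
    (hTI : ∀ ξ : Ω → ℝ, BddMeas P ξ → ∀ h : ℝ, u (fun ω => ξ ω + h) = u ξ + h)
    (hMono : ∀ ξ η : Ω → ℝ, BddMeas P ξ → BddMeas P η → (∀ᵐ ω ∂P, ξ ω ≤ η ω) → u ξ ≤ u η)
    (hNorm : u (fun _ => 0) = 0) {ξ : Ω → ℝ} (hξ : BddMeas P ξ) {c : ℝ} (hc : c < u ξ) :
    P {ω | ξ ω ≤ c} < 1 := by
  refine lt_of_le_of_ne prob_le_one fun h1 => hc.not_ge ?_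
  have hae : ∀ᵐ ω ∂P, ξ ω ≤ c :=
    mem_ae_iff.mpr ((prob_compl_eq_zero_iff (hξ.1 measurableSet_Iic)).mpr h1)
  rw [← utility_const hTI hNorm c]
  exact hMono _ _ hξ (bddMeas_const c) hae

lemma exists_hasDyadicLaw_utility_eq_zero [IsProbabilityMeasure P]
    (hTI : ∀ ξ : Ω → ℝ, BddMeas P ξ → ∀ h : ℝ, u (fun ω => ξ ω + h) = u ξ + h)
    (hMono : ∀ ξ η : Ω → ℝ, BddMeas P ξ → BddMeas P η → (∀ᵐ ω ∂P, ξ ω ≤ η ω) → u ξ ≤ u η)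
    (hNorm : u (fun _ => 0) = 0) {ξ : Ω → ℝ} (hξ : BddMeas P ξ) (hne : u ξ ≠ essInfR P ξ) :
    ∃ k < 0, ∃ b p : ℝ, 0 < p ∧ p < 1 ∧
      ∃ ζ, BddMeas P ζ ∧ HasDyadicLaw P ζ k b p ∧ u ζ = 0 := by
  have hlt : essInfR P ξ < u ξ := (essInfR_le_utility hTI hMono hNorm hξ).lt_of_ne hne.symm
  obtain ⟨c, hmc, hcu⟩ := exists_between hlt
  obtain ⟨C, hC⟩ := hξ.2
  set A := {ω | ξ ω ≤ c}
  have hA : MeasurableSet A := hξ.1 measurableSet_Iic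
  set η := stepFn A Aᶜ c C
  have hη : BddMeas P η := bddMeas_stepFn hA hA.compl c C
  have hξη : u ξ ≤ u η := hMono ξ η hξ hη <| hC.mono fun ω hω => by
    by_cases hωA : ω ∈ A
    · simp only [η, stepFn, if_pos hωA]
      exact hωA
    · simpa [η, stepFn, hωA] using (le_abs_self _).trans hω
  have hshift : stepFn A Aᶜ (c - u η) (C - u η) = fun ω => η ω + -u η := by
    ext ω
    by_cases hωA : ω ∈ A <;> simp [η, stepFn, hωA, sub_eq_add_neg]
  have hp0 : 0 < (P A).toReal :=
    ENNReal.toReal_pos (measure_le_pos_of_essInfR_lt hξ hmc).ne' (measure_ne_top P A)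
  have hp1 : (P A).toReal < 1 := by
    simpa using (ENNReal.toReal_lt_toReal (measure_ne_top P A) ENNReal.one_ne_top).mpr
      (measure_le_lt_one_of_lt_utility hTI hMono hNorm hξ hcu)
  refine ⟨c - u η, by linarith, C - u η, (P A).toReal, hp0, hp1, _, bddMeas_stepFn hA hA.compl _ _,
    hasDyadicLaw_stepFn_compl hA hp0.le (ENNReal.ofReal_toReal (measure_ne_top P A)).symm _ _, ?_⟩
  rw [hshift, hTI η hη]
  ring

lemma utility_stepFn_eq_of_cxLS [IsProbabilityMeasure P] (hCxLS : CxLS P u) {ζ : Ω → ℝ}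
    (hζ : BddMeas P ζ) {k b p : ℝ} (hp0 : 0 ≤ p) (hp1 : p ≤ 1) (hlaw : HasDyadicLaw P ζ k b p)
    (hu : u ζ = u (fun _ => 0)) {t : ℝ} (ht0 : 0 < t) (ht1 : t < 1) {A F : Set Ω}
    (hA : MeasurableSet A) (hF : MeasurableSet F) (hAF : Disjoint A F)
    (hPA : P A = ENNReal.ofReal (t * p)) (hPF : P F = ENNReal.ofReal (t * (1 - p))) :
    u (stepFn A F k b) = u ζ := by
  have hPAF : P (A ∪ F) = ENNReal.ofReal t := by
    rw [measure_union hAF hF, hPA, hPF, ← ENNReal.ofReal_add (by positivity)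
      (mul_nonneg ht0.le (by linarith))]
    ring_nf
  refine hCxLS ζ (fun _ => 0) _ hζ (bddMeas_const 0) (bddMeas_stepFn hA hF k b) hu t ht0 ht1 ?_
  rw [map_stepFn hA hF hAF, measure_compl_eq_ofReal (hA.union hF) ht0.le hPAF, hPA, hPF,
    hlaw, Measure.map_const, measure_univ, one_smul, smul_add, smul_smul, smul_smul,
    ← ENNReal.ofReal_mul ht0.le, ← ENNReal.ofReal_mul ht0.le]

lemma utility_stepFn_div_nonneg (hP : IsAtomless P) [IsFiniteMeasure P]
    (hConc : ∀ ξ η : Ω → ℝ, BddMeas P ξ → BddMeas P η → ∀ l : ℝ, 0 ≤ l → l ≤ 1 →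
      l * u ξ + (1 - l) * u η ≤ u (fun ω => l * ξ ω + (1 - l) * η ω))
    {A : Set Ω} (hA : MeasurableSet A) {k b β : ℝ}
    (hbase : ∀ F, MeasurableSet F → Disjoint A F → P F = ENNReal.ofReal β →
      0 ≤ u (stepFn A F k b))
    {m : ℕ} (hm : 1 ≤ m) {U : Set Ω} (hU : MeasurableSet U) (hAU : Disjoint A U)
    (hPU : P U = m * ENNReal.ofReal β) : 0 ≤ u (stepFn A U k (b / m)) := by
  induction m, hm using Nat.le_induction generalizing U with
  | base => simpa using hbase U hU hAU (by simpa using hPU)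
  | succ m hm ih =>
    obtain ⟨F, hFU, hF, hPF⟩ := hP.exists_subset_measure_eq hU (r := ENNReal.ofReal β)
      (by rw [hPU]; exact le_mul_of_one_le_left zero_le (by exact_mod_cast m.succ_pos))
    have hPUF : P (U \ F) = m * ENNReal.ofReal β := by
      rw [measure_sdiff hFU hF.nullMeasurableSet (measure_ne_top P F), hPU, hPF]
      push_cast
      rw [add_mul, one_mul, ENNReal.add_sub_cancel_right ENNReal.ofReal_ne_top]
    have hm0 : (0 : ℝ) < m := by exact_mod_cast hm
    set l : ℝ := m / (m + 1)
    have hl0 : 0 ≤ l := by positivity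
    have hl1 : l ≤ 1 := div_le_one_of_le₀ (by linarith) (by positivity)
    -- averaging `m` copies spread over `U \ F` with one copy on `F` spreads `b` over all of `U`
    have hsplit : stepFn A U k (b / ↑(m + 1)) =
        fun ω => l * stepFn A (U \ F) k (b / m) ω + (1 - l) * stepFn A F k b ω := by
      ext ω
      by_cases hωA : ω ∈ A
      · simp [stepFn, hωA]; ring
      by_cases hωF : ω ∈ F
      · simp [stepFn, hωA, hωF, hFU hωF, l]; field_simp; ring
      by_cases hωU : ω ∈ U
      · simp [stepFn, hωA, hωF, hωU, l]; field_simp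
      · simp [stepFn, hωA, hωF, hωU]
    have h1 := ih (hU.diff hF) (hAU.mono_right sdiff_subset) hPUF
    have h2 := hbase F hF (hAU.mono_right hFU) hPF
    rw [hsplit]
    exact (add_nonneg (mul_nonneg hl0 h1) (mul_nonneg (sub_nonneg.mpr hl1) h2)).trans
      (hConc _ _ (bddMeas_stepFn hA (hU.diff hF) k (b / m)) (bddMeas_stepFn hA hF k b) l hl0 hl1)

lemma exists_hasDyadicLaw_utility_nonneg [IsProbabilityMeasure P] (hP : IsAtomless P)
    (hMono : ∀ ξ η : Ω → ℝ, BddMeas P ξ → BddMeas P η → (∀ᵐ ω ∂P, ξ ω ≤ η ω) → u ξ ≤ u η)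
    (hNorm : u (fun _ => 0) = 0)
    (hConc : ∀ ξ η : Ω → ℝ, BddMeas P ξ → BddMeas P η → ∀ l : ℝ, 0 ≤ l → l ≤ 1 →
      l * u ξ + (1 - l) * u η ≤ u (fun ω => l * ξ ω + (1 - l) * η ω))
    (hCxLS : CxLS P u) {ζ : Ω → ℝ} (hζ : BddMeas P ζ) {k b p : ℝ} (hp0 : 0 < p) (hp1 : p < 1)
    (hlaw : HasDyadicLaw P ζ k b p) (hu : u ζ = 0) {a : ℝ} (ha : 0 < a) :
    ∃ α : ℝ, 0 < α ∧ α < 1 ∧ ∃ ξ : Ω → ℝ, BddMeas P ξ ∧ HasDyadicLaw P ξ k a α ∧ 0 ≤ u ξ := by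
  obtain ⟨n, hn⟩ := exists_nat_gt (max (b / a) 1)
  have hn1 : (1 : ℝ) < n := (le_max_right _ _).trans_lt hn
  have hbn : b / n ≤ a := by
    rw [div_le_iff₀ (by linarith), mul_comm, ← div_le_iff₀ ha]
    exact ((le_max_left _ _).trans_lt hn).le
  -- `t` is chosen so that the masses `α = t p` on `A` and `β = t (1 - p)` on each of `n` copies
  -- of the upper atom add up to `1`
  set t := 1 / (n * (1 - p) + p)
  have hD : 1 < n * (1 - p) + p := by nlinarith
  have ht0 : 0 < t := by positivity
  have ht1 : t < 1 := by rw [div_lt_one (by linarith)]; exact hD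
  have hα0 : 0 < t * p := mul_pos ht0 hp0
  have hαβ : 1 - t * p = n * (t * (1 - p)) := by
    have ht : t * (n * (1 - p) + p) = 1 := one_div_mul_cancel (by linarith)
    linear_combination -ht
  obtain ⟨A, -, hA, hPA⟩ := hP.exists_subset_measure_eq MeasurableSet.univ
    (r := ENNReal.ofReal (t * p)) (by simpa using (mul_lt_of_lt_one_left hp0 ht1).trans hp1 |>.le)
  have hT := utility_stepFn_div_nonneg hP hConc hA (k := k) (b := b) (β := t * (1 - p))
    (fun F hF hAF hPF => (utility_stepFn_eq_of_cxLS hCxLS hζ hp0.le hp1.le hlaw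
      (by rw [hu, hNorm]) ht0 ht1 hA hF hAF hPA hPF).trans hu |>.ge)
    (Nat.one_le_cast.mp hn1.le) hA.compl disjoint_compl_right
    (by rw [measure_compl_eq_ofReal hA hα0.le hPA, hαβ,
      ENNReal.ofReal_mul (Nat.cast_nonneg n), ENNReal.ofReal_natCast])
  refine ⟨t * p, hα0, (mul_lt_of_lt_one_left hp0 ht1).trans hp1, stepFn A Aᶜ k a,
    bddMeas_stepFn hA hA.compl k a, hasDyadicLaw_stepFn_compl hA hα0.le hPA k a,
    hT.trans (hMono _ _ (bddMeas_stepFn hA hA.compl _ _) (bddMeas_stepFn hA hA.compl _ _)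
      (Eventually.of_forall fun ω => ?_))⟩
  unfold stepFn
  split_ifs <;> simp [hbn]

end Utility

theorem stmt_9_general {Ω : Type} [MeasurableSpace Ω] (P : Measure Ω) [IsProbabilityMeasure P]
    (u : (Ω → ℝ) → ℝ)
    (hAtomless : ∀ A : Set Ω, MeasurableSet A → 0 < P A →
      ∃ B : Set Ω, B ⊆ A ∧ MeasurableSet B ∧ 0 < P B ∧ P B < P A)
    (hTI : ∀ ξ : Ω → ℝ, BddMeas P ξ → ∀ h : ℝ, u (fun ω => ξ ω + h) = u ξ + h)
    (hMono : ∀ ξ η : Ω → ℝ, BddMeas P ξ → BddMeas P η → (∀ᵐ ω ∂P, ξ ω ≤ η ω) → u ξ ≤ u η)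
    (hNorm : u (fun _ => 0) = 0)
    (hConc : ∀ ξ η : Ω → ℝ, BddMeas P ξ → BddMeas P η → ∀ l : ℝ, 0 ≤ l → l ≤ 1 →
      l * u ξ + (1 - l) * u η ≤ u (fun ω => l * ξ ω + (1 - l) * η ω))
    (hCxLS : CxLS P u)
    (hNotEssInf : ∃ ξ : Ω → ℝ, BddMeas P ξ ∧ u ξ ≠ essInfR P ξ) :
    ∃ k₀ : ℝ, k₀ < 0 ∧ ∀ a : ℝ, 0 < a → ∃ α : ℝ, 0 < α ∧ α < 1 ∧
      ∃ ξ : Ω → ℝ, BddMeas P ξ ∧ HasDyadicLaw P ξ k₀ a α ∧ 0 ≤ u ξ := by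
  obtain ⟨ξ, hξ, hne⟩ := hNotEssInf
  obtain ⟨k, hk, b, p, hp0, hp1, ζ, hζ, hlaw, hu⟩ :=
    exists_hasDyadicLaw_utility_eq_zero hTI hMono hNorm hξ hne
  exact ⟨k, hk, fun a ha => exists_hasDyadicLaw_utility_nonneg hAtomless hMono hNorm hConc hCxLS
    hζ hp0 hp1 hlaw hu ha⟩

theorem stmt_9 {Ω : Type} [MeasurableSpace Ω] (P : Measure Ω) [IsProbabilityMeasure P]
    (u : (Ω → ℝ) → ℝ)
    (hAtomless : ∀ A : Set Ω, MeasurableSet A → 0 < P A →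
      ∃ B : Set Ω, B ⊆ A ∧ MeasurableSet B ∧ 0 < P B ∧ P B < P A)
    (hTI : ∀ ξ : Ω → ℝ, BddMeas P ξ → ∀ h : ℝ, u (fun ω => ξ ω + h) = u ξ + h)
    (hMono : ∀ ξ η : Ω → ℝ, BddMeas P ξ → BddMeas P η → (∀ᵐ ω ∂P, ξ ω ≤ η ω) → u ξ ≤ u η)
    (hNorm : u (fun _ => 0) = 0)
    (hLaw : ∀ ξ η : Ω → ℝ, BddMeas P ξ → BddMeas P η → P.map ξ = P.map η → u ξ = u η)
    (hConc : ∀ ξ η : Ω → ℝ, BddMeas P ξ → BddMeas P η → ∀ l : ℝ, 0 ≤ l → l ≤ 1 →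
      l * u ξ + (1 - l) * u η ≤ u (fun ω => l * ξ ω + (1 - l) * η ω))
    (hFatou : ∀ (ξs : ℕ → Ω → ℝ) (ξ : Ω → ℝ), (∀ n, BddMeas P (ξs n)) → BddMeas P ξ →
      (∃ C : ℝ, ∀ n, ∀ᵐ ω ∂P, |ξs n ω| ≤ C) →
      TendstoInMeasure P ξs Filter.atTop ξ →
      Filter.limsup (fun n => u (ξs n)) Filter.atTop ≤ u ξ)
    (hCxLS : CxLS P u)
    (hNotEssInf : ∃ ξ : Ω → ℝ, BddMeas P ξ ∧ u ξ ≠ essInfR P ξ) :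
    ∃ k₀ : ℝ, k₀ < 0 ∧ ∀ a : ℝ, 0 < a → ∃ α : ℝ, 0 < α ∧ α < 1 ∧
      ∃ ξ : Ω → ℝ, BddMeas P ξ ∧ HasDyadicLaw P ξ k₀ a α ∧ 0 ≤ u ξ :=
  stmt_9_general P u hAtomless hTI hMono hNorm hConc hCxLS hNotEssInf
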